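/- arXiv:2202.00708 — 2 statements merged into one kernel-verified Lean document; each statement's English description precedes it below -/
import Mathlib

section
/- Let α be a composition of n and let Z_α be the free ℚ-vector space with basis SET(α), with each π_i^{RS*} extended to a ℚ-linear endomorphism of Z_α (this is well defined since SET(α) ∪ {0} is closed under every π_i^{RS*}). If f : Z_α → Z_α is ℚ-linear with f ∘ f = f and f ∘ π_i^{RS*} = π_i^{RS*} ∘ f for all 1 ≤ i ≤ n−1, then f = 0 or f is the identity map; i.e. the 0-Hecke submodule Z_α is indecomposable. -/
open Classical

namespace ImmHecke

/-- A filling assigns a natural-number entry to each cell `(row, column)` (0-indexed);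
row `0` is the bottom row.  Cells outside the diagram carry the junk value `0`. -/
abbrev Filling : Type := ℕ × ℕ → ℕ

/-- `c` is a cell of the diagram of the composition `α` (0-indexed rows and columns;
row `i` has `α_i` cells). -/
def IsCell (α : List ℕ) (c : ℕ × ℕ) : Prop :=
  c.1 < α.length ∧ c.2 < α.getD c.1 0

/-- `α` is a composition of `n`: a list of positive integers summing to `n`. -/
def IsComposition (α : List ℕ) (n : ℕ) : Prop :=
  (∀ a ∈ α, 0 < a) ∧ α.sum = n

/-- `T` is a bijective filling of the diagram of `α` with the entries `1, …, n`
(where `n = α.sum`), and with value `0` off the diagram. -/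
def IsStdFilling (α : List ℕ) (T : Filling) : Prop :=
  (∀ c, ¬ IsCell α c → T c = 0) ∧
  (∀ c, IsCell α c → 1 ≤ T c ∧ T c ≤ α.sum) ∧
  (∀ c c', IsCell α c → IsCell α c' → T c = T c' → c = c') ∧
  (∀ m, 1 ≤ m → m ≤ α.sum → ∃ c, IsCell α c ∧ T c = m)

/-- A standard immaculate tableau of shape `α`: a bijective standard filling whose
first-column entries strictly increase bottom to top and whose rows strictly
increase left to right. -/
def IsSIT (α : List ℕ) (T : Filling) : Prop :=
  IsStdFilling α T ∧
  (∀ i i' : ℕ, IsCell α (i, 0) → IsCell α (i', 0) → i < i' → T (i, 0) < T (i', 0)) ∧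
  (∀ i j j' : ℕ, IsCell α (i, j) → IsCell α (i, j') → j < j' → T (i, j) < T (i, j'))

/-- A standard extended tableau of shape `α`: a bijective standard filling whose rows
strictly increase left to right and all of whose columns strictly increase
bottom to top.  Note `SET(α) ⊆ SIT(α)`. -/
def IsSET (α : List ℕ) (T : Filling) : Prop :=
  IsStdFilling α T ∧
  (∀ i j j' : ℕ, IsCell α (i, j) → IsCell α (i, j') → j < j' → T (i, j) < T (i, j')) ∧
  (∀ i i' j : ℕ, IsCell α (i, j) → IsCell α (i', j) → i < i' → T (i, j) < T (i', j))

/-- `SIT*(α)`: standard immaculate tableaux whose first column contains exactly the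
entries `1, 2, …, ℓ(α)`. -/
def IsSITstar (α : List ℕ) (T : Filling) : Prop :=
  IsSIT α T ∧
  (∀ i, IsCell α (i, 0) → 1 ≤ T (i, 0) ∧ T (i, 0) ≤ α.length) ∧
  (∀ m, 1 ≤ m → m ≤ α.length → ∃ i, IsCell α (i, 0) ∧ T (i, 0) = m)

/-- In `T`, the entry `m+1` lies in a row strictly above the row of `m`. -/
def SuccAbove (α : List ℕ) (T : Filling) (m : ℕ) : Prop :=
  ∃ c c', IsCell α c ∧ IsCell α c' ∧ T c = m ∧ T c' = m + 1 ∧ c.1 < c'.1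

/-- In `T`, the entries `m` and `m+1` lie in the same row. -/
def SuccSameRow (α : List ℕ) (T : Filling) (m : ℕ) : Prop :=
  ∃ c c', IsCell α c ∧ IsCell α c' ∧ T c = m ∧ T c' = m + 1 ∧ c.1 = c'.1

/-- In `T`, the entry `m+1` lies in a row strictly below the row of `m`. -/
def SuccBelow (α : List ℕ) (T : Filling) (m : ℕ) : Prop :=
  ∃ c c', IsCell α c ∧ IsCell α c' ∧ T c = m ∧ T c' = m + 1 ∧ c'.1 < c.1

/-- In `T`, the entries `m` and `m+1` are both in the first column. -/
def BothFirstColumn (α : List ℕ) (T : Filling) (m : ℕ) : Prop :=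
  ∃ c c', IsCell α c ∧ IsCell α c' ∧ T c = m ∧ T c' = m + 1 ∧ c.2 = 0 ∧ c'.2 = 0

/-- `s_i(T)`: exchange the entries `i` and `i+1` of `T`. -/
def swapEntries (i : ℕ) (T : Filling) : Filling :=
  fun c => if T c = i then i + 1 else if T c = i + 1 then i else T c

/-- The row-strict dual immaculate 0-Hecke operator `π_i^{RS*}` on `SIT(α) ∪ {0}`
(`0` is encoded as `none`): `π_i(T) = T` if `i+1` is strictly above `i`;
`π_i(T) = 0` if `i` and `i+1` are in the same row; `π_i(T) = s_i(T)` if `i+1` is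
strictly below `i`. -/
noncomputable def piRS (α : List ℕ) (i : ℕ) : Option Filling → Option Filling
  | none => none
  | some T =>
    if SuccAbove α T i then some T
    else if SuccSameRow α T i then none
    else some (swapEntries i T)

/-- The dual immaculate 0-Hecke operator `π_i^{S*}` on `SIT(α) ∪ {0}`:
`π_i(T) = T` if `i+1` is in a row weakly below `i`; `π_i(T) = 0` if `i` and `i+1`
are both in the first column; `π_i(T) = s_i(T)` if `i+1` is strictly above `i`
and `i, i+1` are not both in the first column. -/
noncomputable def piS (α : List ℕ) (i : ℕ) : Option Filling → Option Filling
  | none => none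
  | some T =>
    if SuccSameRow α T i ∨ SuccBelow α T i then some T
    else if BothFirstColumn α T i then none
    else some (swapEntries i T)

/-- The 0-Hecke operator `π_i^{A*}` on `SIT(α)`: `π_i(T) = T` if `i+1` is strictly
above `i` or in the same row as `i`; `π_i(T) = s_i(T)` if `i+1` is strictly below `i`. -/
noncomputable def piA (α : List ℕ) (i : ℕ) (T : Filling) : Filling :=
  if SuccBelow α T i then swapEntries i T else T

/-- The 0-Hecke operator `π_i^{Ā*}` on `SIT(α) ∪ {0}`: `π_i(T) = T` if `i+1` is
strictly below `i`; `π_i(T) = 0` if `i` and `i+1` are in the same row or both in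
the first column; `π_i(T) = s_i(T)` if `i+1` is strictly above `i` and `i, i+1`
are not both in the first column. -/
noncomputable def piAbar (α : List ℕ) (i : ℕ) : Option Filling → Option Filling
  | none => none
  | some T =>
    if SuccBelow α T i then some T
    else if SuccSameRow α T i ∨ BothFirstColumn α T i then none
    else some (swapEntries i T)

/-- `x` belongs to `SIT(α) ∪ {0}` (with `0 = none`). -/
def InSITZ (α : List ℕ) (x : Option Filling) : Prop :=
  ∀ T, x = some T → IsSIT α T

/-- Successively apply the operators `π_{i_1}^{RS*}, …, π_{i_r}^{RS*}` (the list `l = [i_1, …, i_r]`). -/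
noncomputable def applySeqRS (α : List ℕ) (l : List ℕ) (x : Option Filling) : Option Filling :=
  l.foldl (fun y i => piRS α i y) x

/-- Successively apply the operators `π_{i_1}^{S*}, …, π_{i_r}^{S*}`. -/
noncomputable def applySeqS (α : List ℕ) (l : List ℕ) (x : Option Filling) : Option Filling :=
  l.foldl (fun y i => piS α i y) x

/-- The relation `T₁ ≼ T₂` on `SIT(α)`: some sequence of operators `π_i^{RS*}`
(indices in `{1, …, n-1}`, possibly empty) sends `T₁` to `T₂`. -/
def preRS (α : List ℕ) (T₁ T₂ : Filling) : Prop :=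
  ∃ l : List ℕ, (∀ i ∈ l, 1 ≤ i ∧ i ≤ α.sum - 1) ∧ applySeqRS α l (some T₁) = some T₂

/-- The one-line notation of `σ(T)`: read the entries of `T` from right to left in
each row, rows from top to bottom. -/
def readingWord (α : List ℕ) (T : Filling) : List ℕ :=
  ((List.range α.length).reverse).flatMap
    (fun i => ((List.range (α.getD i 0)).map fun j => T (i, j)).reverse)

/-- The number of inversions of a word `w`: pairs of positions `p < q` with `w p > w q`. -/
def inversions (w : List ℕ) : ℕ :=
  ((Finset.range w.length ×ˢ Finset.range w.length).filter
    (fun pq : ℕ × ℕ => pq.1 < pq.2 ∧ w.getD pq.2 0 < w.getD pq.1 0)).card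

/-- `S⁰_α`: first column contains `1, …, ℓ` bottom to top; the remaining cells are
filled with `ℓ+1, …, n` consecutively, reading rows from top to bottom and left to
right within each row. -/
noncomputable def S0 (α : List ℕ) : Filling := fun c =>
  if IsCell α c then
    if c.2 = 0 then c.1 + 1
    else
      α.length + (((List.range α.length).filter fun r => c.1 < r).map fun r => α.getD r 0 - 1).sum + c.2
  else 0

/-- `S^{row}_α`: the row superstandard tableau, entries `1, …, n` placed consecutively
reading rows bottom to top, left to right within each row. -/
noncomputable def Srow (α : List ℕ) : Filling := fun c =>
  if IsCell α c then (α.take c.1).sum + c.2 + 1 else 0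

/-- `S^{row*}_α`: first column contains `1, …, ℓ` bottom to top; the remaining cells
are filled with `ℓ+1, …, n` consecutively, reading rows bottom to top, left to right
within each row. -/
noncomputable def SrowStar (α : List ℕ) : Filling := fun c =>
  if IsCell α c then
    if c.2 = 0 then c.1 + 1
    else α.length + ((List.range c.1).map fun r => α.getD r 0 - 1).sum + c.2
  else 0

/-- `S^{col}_α`: the column superstandard tableau, entries `1, …, n` placed
consecutively reading columns bottom to top, columns left to right. -/
noncomputable def Scol (α : List ℕ) : Filling := fun c =>
  if IsCell α c then
    ((List.range c.2).map fun j' =>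
        ((List.range α.length).filter fun r => j' < α.getD r 0).length).sum
      + ((List.range c.1).filter fun r => c.2 < α.getD r 0).length + 1
  else 0

/-- The image of a basis element of `V_α` under the linearly extended operator
`π_i^{RS*}` (the value `0` of the operator is interpreted as the zero vector). -/
noncomputable def piTargetRS (α : List ℕ) (i : ℕ) (T : {T : Filling // IsSIT α T}) :
    ({T : Filling // IsSIT α T} →₀ ℚ) :=
  match piRS α i (some T.val) with
  | none => 0
  | some T' => if h : IsSIT α T' then Finsupp.single ⟨T', h⟩ 1 else 0

/-- The operator `π_i^{RS*}` extended to a `ℚ`-linear endomorphism of the free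
`ℚ`-vector space `V_α` with basis `SIT(α)`. -/
noncomputable def piRSLin (α : List ℕ) (i : ℕ) :
    ({T : Filling // IsSIT α T} →₀ ℚ) →ₗ[ℚ] ({T : Filling // IsSIT α T} →₀ ℚ) :=
  Finsupp.lsum ℚ fun T => LinearMap.toSpanSingleton ℚ _ (piTargetRS α i T)

/-- The image of a basis element of `Z_α` under the linearly extended operator
`π_i^{RS*}`. -/
noncomputable def piTargetSET (α : List ℕ) (i : ℕ) (T : {T : Filling // IsSET α T}) :
    ({T : Filling // IsSET α T} →₀ ℚ) :=
  match piRS α i (some T.val) with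
  | none => 0
  | some T' => if h : IsSET α T' then Finsupp.single ⟨T', h⟩ 1 else 0

/-- The operator `π_i^{RS*}` extended to a `ℚ`-linear endomorphism of the free
`ℚ`-vector space `Z_α` with basis `SET(α)`. -/
noncomputable def piRSLinSET (α : List ℕ) (i : ℕ) :
    ({T : Filling // IsSET α T} →₀ ℚ) →ₗ[ℚ] ({T : Filling // IsSET α T} →₀ ℚ) :=
  Finsupp.lsum ℚ fun T => LinearMap.toSpanSingleton ℚ _ (piTargetSET α i T)

/-!
The column superstandard tableau `Scol α` generates `Z_α`. Any other SET `T` has an ascent `i`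
whose entries `i, i + 1` lie in different columns; swapping them gives a SET of smaller row
weight, which `π_i` sends back to `T`. So a map commuting with the `π_i` is determined by its
value on `Scol α`.

That value is a multiple of `Scol α`: the image of `π_i` is spanned by tableaux with ascent `i`,
and `π_i` fixes `Scol α` whenever `i` is an ascent of `Scol α`, so `f (Scol α)` is supported on
SETs `T` having all ascents of `Scol α`. Such a `T` equals `Scol α`: each column of `Scol α` is a
run of ascents, hence occupies distinct rows of `T`; so the entries to the left of `m` in its row
of `T` come from distinct earlier columns of `Scol α`, the column of `m` in `T` is at most its
column in `Scol α`, and equal column sums force equality. Hence `f = a • id`, and `f ∘ f = f`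
gives `a = 0` or `a = 1`.
-/

open Finset

variable {α : List ℕ} {T : Filling} {i : ℕ}

def cells (α : List ℕ) : Finset (ℕ × ℕ) :=
  (range α.length).biUnion fun r => {r} ×ˢ range (α.getD r 0)

lemma mem_cells {c : ℕ × ℕ} : c ∈ cells α ↔ IsCell α c := by
  simp only [cells, mem_biUnion, mem_product, mem_singleton, mem_range]
  exact ⟨fun ⟨_, hr, hc1, hc2⟩ => ⟨hc1 ▸ hr, hc1 ▸ hc2⟩,
    fun h => ⟨c.1, h.1, rfl, h.2⟩⟩

lemma sum_range_getD (α : List ℕ) : ∑ r ∈ range α.length, α.getD r 0 = α.sum := by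
  induction α with
  | nil => simp
  | cons a l ih =>
    rw [List.length_cons, sum_range_succ']
    simp only [List.getD_cons_succ, List.getD_cons_zero, ih, List.sum_cons, add_comm]

lemma card_cells : #(cells α) = α.sum := by
  rw [cells, card_biUnion]
  · simp only [card_product, card_singleton, card_range, one_mul, sum_range_getD]
  · intro r _ r' _ hrr'
    rw [Function.onFun, disjoint_left]
    intro c h h'
    simp only [mem_product, mem_singleton] at h h'
    exact hrr' (h.1.symm.trans h'.1)

lemma isCell_iff_lt_getD {c : ℕ × ℕ} : IsCell α c ↔ c.2 < α.getD c.1 0 := by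
  refine ⟨And.right, fun h => ⟨?_, h⟩⟩
  by_contra hlen
  rw [List.getD_eq_default _ _ (not_lt.1 hlen)] at h
  exact Nat.not_lt_zero _ h

def colLex (c : ℕ × ℕ) : ℕ ×ₗ ℕ := toLex (c.2, c.1)

lemma colLex_lt_colLex {c c' : ℕ × ℕ} :
    colLex c < colLex c' ↔ c.2 < c'.2 ∨ c.2 = c'.2 ∧ c.1 < c'.1 :=
  Prod.Lex.toLex_lt_toLex

lemma colLex_injective : Function.Injective colLex := fun c c' h => by
  simp only [colLex, toLex_inj, Prod.mk.injEq] at h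
  exact Prod.ext h.2 h.1

def colRank (α : List ℕ) (c : ℕ × ℕ) : ℕ := #{c' ∈ cells α | colLex c' < colLex c}

lemma colRank_lt_colRank {c c' : ℕ × ℕ} (hc : IsCell α c) (h : colLex c < colLex c') :
    colRank α c < colRank α c' := by
  refine card_lt_card ⟨fun d hd => ?_, fun hsub => ?_⟩
  · rw [mem_filter] at hd ⊢
    exact ⟨hd.1, hd.2.trans h⟩
  · exact lt_irrefl _ (mem_filter.1 (hsub (mem_filter.2 ⟨mem_cells.2 hc, h⟩))).2

lemma colRank_lt_sum {c : ℕ × ℕ} (hc : IsCell α c) : colRank α c < α.sum := by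
  rw [← card_cells]
  exact card_lt_card (filter_ssubset.2 ⟨c, mem_cells.2 hc, lt_irrefl _⟩)

lemma length_filter_range (p : ℕ → Prop) [DecidablePred p] (k : ℕ) :
    ((List.range k).filter fun r => decide (p r)).length = #{r ∈ range k | p r} := rfl

lemma card_cells_col_lt (j k : ℕ) :
    #{c ∈ cells α | c.2 = j ∧ c.1 < k} = #{r ∈ range k | j < α.getD r 0} := by
  refine card_bij' (fun c _ => c.1) (fun r _ => (r, j)) ?_ ?_ ?_ ?_
  · intro c hc
    simp only [mem_filter, mem_cells, mem_range] at hc ⊢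
    obtain ⟨hc, rfl, hk⟩ := hc
    exact ⟨hk, hc.2⟩
  · intro r hr
    rw [mem_filter, mem_range] at hr
    exact mem_filter.2 ⟨mem_cells.2 (isCell_iff_lt_getD.2 hr.2), rfl, hr.1⟩
  · intro c hc
    simp only [mem_filter] at hc
    simp [← hc.2.1]
  · intro r _
    rfl

lemma sum_colHeight (J : ℕ) :
    ((List.range J).map fun j =>
        ((List.range α.length).filter fun r => j < α.getD r 0).length).sum
      = #{c ∈ cells α | c.2 < J} := by
  induction J with
  | zero => simp
  | succ J ih =>
    rw [List.range_succ, List.map_append, List.sum_append, ih, List.map_singleton,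
      List.sum_singleton, length_filter_range, ← card_cells_col_lt J α.length,
      ← card_union_of_disjoint]
    · congr 1
      ext c
      simp only [mem_union, mem_filter, mem_cells]
      constructor
      · rintro (⟨hc, h⟩ | ⟨hc, h, -⟩) <;> exact ⟨hc, by omega⟩
      · rintro ⟨hc, h⟩
        rcases Nat.lt_succ_iff_lt_or_eq.1 h with h | h
        · exact Or.inl ⟨hc, h⟩
        · exact Or.inr ⟨hc, h, hc.1⟩
    · rw [disjoint_filter]
      intro c _ h h'
      omega

lemma scol_eq_colRank {c : ℕ × ℕ} (hc : IsCell α c) : Scol α c = colRank α c + 1 := by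
  rw [Scol, if_pos hc, sum_colHeight, length_filter_range, ← card_cells_col_lt,
    ← card_union_of_disjoint]
  · congr 2
    ext c'
    simp only [mem_union, mem_filter, colLex_lt_colLex]
    tauto
  · rw [disjoint_filter]
    intro c _ h h'
    omega

noncomputable def cellOf (α : List ℕ) (T : Filling) (m : ℕ) : ℕ × ℕ :=
  if h : ∃ c, IsCell α c ∧ T c = m then h.choose else (0, 0)

lemma IsStdFilling.eq_of_apply_eq (hT : IsStdFilling α T) {c c' : ℕ × ℕ} (hc : IsCell α c)
    (hc' : IsCell α c') (h : T c = T c') : c = c' :=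
  hT.2.2.1 c c' hc hc' h

lemma IsStdFilling.cellOf_spec (hT : IsStdFilling α T) {m : ℕ} (h1 : 1 ≤ m)
    (h2 : m ≤ α.sum) : IsCell α (cellOf α T m) ∧ T (cellOf α T m) = m := by
  have h : ∃ c, IsCell α c ∧ T c = m := hT.2.2.2 m h1 h2
  rw [cellOf, dif_pos h]
  exact h.choose_spec

lemma IsStdFilling.cellOf_apply (hT : IsStdFilling α T) {c : ℕ × ℕ} (hc : IsCell α c) :
    cellOf α T (T c) = c :=
  have hs := hT.cellOf_spec (hT.2.1 c hc).1 (hT.2.1 c hc).2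
  hT.eq_of_apply_eq hs.1 hc hs.2

lemma IsStdFilling.exists_consecutive_iff (hT : IsStdFilling α T)
    {R : ℕ × ℕ → ℕ × ℕ → Prop} {m : ℕ} (h1 : 1 ≤ m) (h2 : m + 1 ≤ α.sum) :
    (∃ c c', IsCell α c ∧ IsCell α c' ∧ T c = m ∧ T c' = m + 1 ∧ R c c') ↔
      R (cellOf α T m) (cellOf α T (m + 1)) := by
  constructor
  · rintro ⟨c, c', hc, hc', rfl, hv', hR⟩
    rwa [← hv', hT.cellOf_apply hc, hT.cellOf_apply hc']
  · intro hR
    have hm := hT.cellOf_spec h1 (by omega)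
    have hm' := hT.cellOf_spec (by omega) h2
    exact ⟨_, _, hm.1, hm'.1, hm.2, hm'.2, hR⟩

lemma IsStdFilling.bounds_of_succAbove (hT : IsStdFilling α T) (h : SuccAbove α T i) :
    1 ≤ i ∧ i + 1 ≤ α.sum := by
  obtain ⟨c, c', hc, hc', hv, hv', -⟩ := h
  have := hT.2.1 c hc
  have := hT.2.1 c' hc'
  omega

lemma IsStdFilling.succAbove_iff (hT : IsStdFilling α T) {m : ℕ} (h1 : 1 ≤ m)
    (h2 : m + 1 ≤ α.sum) : SuccAbove α T m ↔ (cellOf α T m).1 < (cellOf α T (m + 1)).1 :=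
  hT.exists_consecutive_iff (R := fun c c' => c.1 < c'.1) h1 h2

lemma IsStdFilling.succSameRow_iff (hT : IsStdFilling α T) {m : ℕ} (h1 : 1 ≤ m)
    (h2 : m + 1 ≤ α.sum) : SuccSameRow α T m ↔ (cellOf α T m).1 = (cellOf α T (m + 1)).1 :=
  hT.exists_consecutive_iff (R := fun c c' => c.1 = c'.1) h1 h2

lemma IsStdFilling.eq_colRank_add_one (hT : IsStdFilling α T)
    (hmono : ∀ c c', IsCell α c → IsCell α c' → colLex c < colLex c' → T c < T c')
    {c : ℕ × ℕ} (hc : IsCell α c) : T c = colRank α c + 1 := by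
  have hTc := hT.2.1 c hc
  have hrank : colRank α c = #(Ico 1 (T c)) := by
    refine card_bij (fun c' _ => T c') (fun c' hc' => ?_) (fun c₁ h₁ c₂ h₂ h => ?_)
      fun m hm => ?_
    · rw [mem_filter, mem_cells] at hc'
      exact mem_Ico.2 ⟨(hT.2.1 c' hc'.1).1, hmono c' c hc'.1 hc hc'.2⟩
    · rw [mem_filter, mem_cells] at h₁ h₂
      exact hT.eq_of_apply_eq h₁.1 h₂.1 h
    · rw [mem_Ico] at hm
      obtain ⟨c', hc', rfl⟩ := hT.2.2.2 m hm.1 (by omega)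
      refine ⟨c', mem_filter.2 ⟨mem_cells.2 hc', ?_⟩, rfl⟩
      rcases lt_trichotomy (colLex c') (colLex c) with h | h | h
      · exact h
      · rw [colLex_injective h] at hm
        exact absurd hm.2 (lt_irrefl _)
      · exact absurd (hmono c c' hc hc' h) (not_lt.2 hm.2.le)
  rw [hrank, Nat.card_Ico]
  omega

lemma scol_lt_scol {c c' : ℕ × ℕ} (hc : IsCell α c) (hc' : IsCell α c')
    (h : colLex c < colLex c') : Scol α c < Scol α c' := by
  rw [scol_eq_colRank hc, scol_eq_colRank hc']
  exact Nat.succ_lt_succ (colRank_lt_colRank hc h)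

lemma isSET_scol : IsSET α (Scol α) := by
  have hinj : ∀ c c', IsCell α c → IsCell α c' → Scol α c = Scol α c' → c = c' := by
    intro c c' hc hc' h
    by_contra hne
    rcases lt_or_gt_of_ne (colLex_injective.ne hne) with hlt | hlt
    · exact (scol_lt_scol hc hc' hlt).ne h
    · exact (scol_lt_scol hc' hc hlt).ne h.symm
  have hbound : ∀ c, IsCell α c → 1 ≤ Scol α c ∧ Scol α c ≤ α.sum := fun c hc => by
    rw [scol_eq_colRank hc]
    exact ⟨Nat.le_add_left 1 _, colRank_lt_sum hc⟩
  refine ⟨⟨fun c hc => if_neg hc, hbound, hinj, fun m h1 h2 => ?_⟩,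
    fun i j j' hc hc' hj => scol_lt_scol hc hc' (colLex_lt_colLex.2 (Or.inl hj)),
    fun i i' j hc hc' hi => scol_lt_scol hc hc' (colLex_lt_colLex.2 (Or.inr ⟨rfl, hi⟩))⟩
  obtain ⟨c, hc, hm⟩ := surj_on_of_inj_on_of_card_le (s := cells α) (t := Icc 1 α.sum)
    (fun c _ => Scol α c)
    (fun c hc => mem_Icc.2 (hbound c (mem_cells.1 hc)))
    (fun c c' hc hc' => hinj c c' (mem_cells.1 hc) (mem_cells.1 hc'))
    (by rw [card_cells, Nat.card_Icc, Nat.add_sub_cancel]) m (mem_Icc.2 ⟨h1, h2⟩)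
  exact ⟨c, mem_cells.1 hc, hm.symm⟩

lemma eq_scol_of_colLex_strictMono (hT : IsStdFilling α T)
    (hmono : ∀ c c', IsCell α c → IsCell α c' → colLex c < colLex c' → T c < T c') :
    T = Scol α := by
  funext c
  by_cases hc : IsCell α c
  · rw [hT.eq_colRank_add_one hmono hc, scol_eq_colRank hc]
  · rw [hT.1 c hc, isSET_scol.1.1 c hc]

lemma swapEntries_apply (i : ℕ) (T : Filling) (c : ℕ × ℕ) :
    swapEntries i T c = Equiv.swap i (i + 1) (T c) := by
  rw [swapEntries, Equiv.swap_apply_def]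

lemma swapEntries_swapEntries (i : ℕ) (T : Filling) : swapEntries i (swapEntries i T) = T :=
  funext fun c => by simp only [swapEntries_apply, Equiv.swap_apply_self]

lemma swap_succ_mem_Icc {m n : ℕ} (h1 : 1 ≤ i) (h2 : i + 1 ≤ n) (hm1 : 1 ≤ m)
    (hm2 : m ≤ n) : 1 ≤ Equiv.swap i (i + 1) m ∧ Equiv.swap i (i + 1) m ≤ n := by
  rw [Equiv.swap_apply_def]
  split_ifs <;> omega

lemma swap_succ_lt_swap_succ {a b : ℕ} (hab : a < b) (hne : ¬(a = i ∧ b = i + 1)) :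
    Equiv.swap i (i + 1) a < Equiv.swap i (i + 1) b := by
  simp only [Equiv.swap_apply_def]
  split_ifs <;> omega

lemma isStdFilling_swapEntries (hT : IsStdFilling α T) (h1 : 1 ≤ i) (h2 : i + 1 ≤ α.sum) :
    IsStdFilling α (swapEntries i T) := by
  refine ⟨fun c hc => ?_, fun c hc => ?_, fun c c' hc hc' h => ?_, fun m hm1 hm2 => ?_⟩
  · rw [swapEntries_apply, hT.1 c hc, Equiv.swap_apply_of_ne_of_ne] <;> omega
  · rw [swapEntries_apply]
    exact swap_succ_mem_Icc h1 h2 (hT.2.1 c hc).1 (hT.2.1 c hc).2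
  · rw [swapEntries_apply, swapEntries_apply] at h
    exact hT.eq_of_apply_eq hc hc' ((Equiv.swap i (i + 1)).injective h)
  · have hm := swap_succ_mem_Icc h1 h2 hm1 hm2
    obtain ⟨c, hc, hv⟩ := hT.2.2.2 _ hm.1 hm.2
    exact ⟨c, hc, by rw [swapEntries_apply, hv, Equiv.swap_apply_self]⟩

lemma IsStdFilling.cellOf_swapEntries (hT : IsStdFilling α T) (h1 : 1 ≤ i)
    (h2 : i + 1 ≤ α.sum) {m : ℕ} (hm1 : 1 ≤ m) (hm2 : m ≤ α.sum) :
    cellOf α (swapEntries i T) m = cellOf α T (Equiv.swap i (i + 1) m) := by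
  have hm := swap_succ_mem_Icc h1 h2 hm1 hm2
  obtain ⟨hd, hv⟩ := hT.cellOf_spec hm.1 hm.2
  have hswap : swapEntries i T (cellOf α T (Equiv.swap i (i + 1) m)) = m := by
    rw [swapEntries_apply, hv, Equiv.swap_apply_self]
  conv_lhs => rw [← hswap]
  exact (isStdFilling_swapEntries hT h1 h2).cellOf_apply hd

lemma IsStdFilling.cellOf_swapEntries_left (hT : IsStdFilling α T) (h1 : 1 ≤ i)
    (h2 : i + 1 ≤ α.sum) : cellOf α (swapEntries i T) i = cellOf α T (i + 1) := by
  rw [hT.cellOf_swapEntries h1 h2 h1 (by omega), Equiv.swap_apply_left]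

lemma IsStdFilling.cellOf_swapEntries_right (hT : IsStdFilling α T) (h1 : 1 ≤ i)
    (h2 : i + 1 ≤ α.sum) : cellOf α (swapEntries i T) (i + 1) = cellOf α T i := by
  rw [hT.cellOf_swapEntries h1 h2 (by omega) h2, Equiv.swap_apply_right]

lemma isSET_swapEntries (hT : IsSET α T) (h1 : 1 ≤ i) (h2 : i + 1 ≤ α.sum)
    (hrow : (cellOf α T i).1 ≠ (cellOf α T (i + 1)).1)
    (hcol : (cellOf α T i).2 ≠ (cellOf α T (i + 1)).2) :
    IsSET α (swapEntries i T) := by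
  obtain ⟨hstd, hrows, hcols⟩ := hT
  have hcell : ∀ {c c'}, IsCell α c → IsCell α c' → T c = i → T c' = i + 1 →
      cellOf α T i = c ∧ cellOf α T (i + 1) = c' := fun hc hc' hv hv' =>
    ⟨hv ▸ hstd.cellOf_apply hc, hv' ▸ hstd.cellOf_apply hc'⟩
  refine ⟨isStdFilling_swapEntries hstd h1 h2, fun r j j' hc hc' hj => ?_,
    fun r r' j hc hc' hr => ?_⟩
  · rw [swapEntries_apply, swapEntries_apply]
    refine swap_succ_lt_swap_succ (hrows r j j' hc hc' hj) fun ⟨hv, hv'⟩ => hrow ?_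
    rw [(hcell hc hc' hv hv').1, (hcell hc hc' hv hv').2]
  · rw [swapEntries_apply, swapEntries_apply]
    refine swap_succ_lt_swap_succ (hcols r r' j hc hc' hr) fun ⟨hv, hv'⟩ => hcol ?_
    rw [(hcell hc hc' hv hv').1, (hcell hc hc' hv hv').2]

def rowWeight (α : List ℕ) (T : Filling) : ℕ := ∑ c ∈ cells α, T c * c.1

lemma rowWeight_swapEntries_lt (hT : IsStdFilling α T) (h1 : 1 ≤ i) (h2 : i + 1 ≤ α.sum)
    (hrow : (cellOf α T i).1 < (cellOf α T (i + 1)).1) :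
    rowWeight α (swapEntries i T) < rowWeight α T := by
  obtain ⟨ha, hva⟩ := hT.cellOf_spec h1 (by omega)
  obtain ⟨hb, hvb⟩ := hT.cellOf_spec (by omega) h2
  set a := cellOf α T i
  set b := cellOf α T (i + 1)
  have hab : b ≠ a := fun h => hrow.ne (congrArg Prod.fst h).symm
  have hsplit : ∀ g : ℕ × ℕ → ℕ,
      ∑ c ∈ cells α, g c = g a + (g b + ∑ c ∈ ((cells α).erase a).erase b, g c) := by
    intro g
    rw [add_sum_erase _ g (mem_erase.2 ⟨hab, mem_cells.2 hb⟩),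
      add_sum_erase _ g (mem_cells.2 ha)]
  have hrest : ∑ c ∈ ((cells α).erase a).erase b, swapEntries i T c * c.1
      = ∑ c ∈ ((cells α).erase a).erase b, T c * c.1 := by
    refine sum_congr rfl fun c hc => ?_
    obtain ⟨hcb, hca, hc⟩ := by simpa only [mem_erase, mem_cells] using hc
    rw [swapEntries_apply, Equiv.swap_apply_of_ne_of_ne]
    · exact fun h => hca (hT.eq_of_apply_eq hc ha (h.trans hva.symm))
    · exact fun h => hcb (hT.eq_of_apply_eq hc hb (h.trans hvb.symm))
  rw [rowWeight, rowWeight, hsplit, hsplit fun c => T c * c.1, hrest, swapEntries_apply,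
    swapEntries_apply, hva, hvb, Equiv.swap_apply_left, Equiv.swap_apply_right]
  nlinarith

lemma eq_scol_of_monotoneOn_col (hT : IsSET α T)
    (hmono : MonotoneOn (fun m => (cellOf α T m).2) (Set.Icc 1 α.sum)) : T = Scol α := by
  refine eq_scol_of_colLex_strictMono hT.1 fun ⟨r, j⟩ ⟨r', j'⟩ hc hc' h => ?_
  rcases lt_trichotomy (T (r, j)) (T (r', j')) with hlt | heq | hgt
  · exact hlt
  · rw [hT.1.eq_of_apply_eq hc hc' heq] at h
    exact absurd h (lt_irrefl _)
  · have hcol : j' ≤ j := by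
      simpa only [hT.1.cellOf_apply hc, hT.1.cellOf_apply hc'] using
        hmono (hT.1.2.1 _ hc') (hT.1.2.1 _ hc) hgt.le
    rcases colLex_lt_colLex.1 h with hj | ⟨rfl, hr⟩
    · omega
    · exact absurd (hT.2.2 r r' j hc hc' hr) (not_lt.2 hgt.le)

lemma monotoneOn_col_scol :
    MonotoneOn (fun m => (cellOf α (Scol α) m).2) (Set.Icc 1 α.sum) := by
  intro m hm m' hm' hle
  by_contra! hlt
  have hS := isSET_scol (α := α)
  obtain ⟨hc, hv⟩ := hS.1.cellOf_spec hm.1 hm.2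
  obtain ⟨hc', hv'⟩ := hS.1.cellOf_spec hm'.1 hm'.2
  have := scol_lt_scol hc' hc (colLex_lt_colLex.2 (Or.inl hlt))
  omega

lemma IsSET.col_le_of_apply_eq_succ (hT : IsSET α T) {c c' : ℕ × ℕ} (hc : IsCell α c)
    (hc' : IsCell α c') (hv : T c' = T c + 1) (hvert : c.1 < c'.1 → c.2 = c'.2) :
    c.2 ≤ c'.2 := by
  obtain ⟨r, j⟩ := c
  obtain ⟨r', j'⟩ := c'
  by_contra! hj
  rcases lt_trichotomy r r' with hr | rfl | hr
  · exact hj.ne' (hvert hr)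
  · have := hT.2.1 r j' j hc' hc hj
    omega
  · have hcell : IsCell α (r, j') := ⟨hc.1, hj.trans hc.2⟩
    have := hT.2.2 r' r j' hc' hcell hr
    have := hT.2.1 r j' j hcell hc hj
    omega

lemma exists_succAbove_col_ne_of_ne_scol (hT : IsSET α T) (hne : T ≠ Scol α) :
    ∃ i, 1 ≤ i ∧ i + 1 ≤ α.sum ∧ (cellOf α T i).1 < (cellOf α T (i + 1)).1 ∧
      (cellOf α T i).2 ≠ (cellOf α T (i + 1)).2 := by
  by_contra! hvert
  refine hne (eq_scol_of_monotoneOn_col hT (monotoneOn_of_le_succ Set.ordConnected_Icc ?_))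
  intro m _ hm hm'
  rw [Order.succ_eq_add_one] at hm' ⊢
  obtain ⟨hc, hv⟩ := hT.1.cellOf_spec hm.1 hm.2
  obtain ⟨hc', hv'⟩ := hT.1.cellOf_spec hm'.1 hm'.2
  exact hT.col_le_of_apply_eq_succ hc hc' (by rw [hv, hv']) (hvert m hm.1 hm'.2)

lemma IsStdFilling.sum_cellOf (hT : IsStdFilling α T) (g : ℕ × ℕ → ℕ) :
    ∑ m ∈ Icc 1 α.sum, g (cellOf α T m) = ∑ c ∈ cells α, g c := by
  refine sum_nbij' (cellOf α T) T (fun m hm => ?_) (fun c hc => ?_) (fun m hm => ?_)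
    (fun c hc => hT.cellOf_apply (mem_cells.1 hc)) fun _ _ => rfl
  · rw [mem_Icc] at hm
    exact mem_cells.2 (hT.cellOf_spec hm.1 hm.2).1
  · exact mem_Icc.2 (hT.2.1 c (mem_cells.1 hc))
  · rw [mem_Icc] at hm
    exact (hT.cellOf_spec hm.1 hm.2).2

lemma succAbove_scol_of_col_eq {z : ℕ} (h1 : 1 ≤ z) (h2 : z + 1 ≤ α.sum)
    (hcol : (cellOf α (Scol α) z).2 = (cellOf α (Scol α) (z + 1)).2) :
    SuccAbove α (Scol α) z := by
  have hS := (isSET_scol (α := α)).1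
  rw [hS.succAbove_iff h1 h2]
  obtain ⟨hc, hv⟩ := hS.cellOf_spec h1 (by omega)
  obtain ⟨hc', hv'⟩ := hS.cellOf_spec (by omega) h2
  by_contra! hrow
  rcases hrow.lt_or_eq with hlt | heq
  · have := scol_lt_scol hc' hc (colLex_lt_colLex.2 (Or.inr ⟨hcol.symm, hlt⟩))
    omega
  · have := congrArg (Scol α) (Prod.ext heq hcol.symm)
    omega

lemma row_lt_of_col_scol_eq (hT : IsSET α T)
    (hasc : ∀ i, SuccAbove α (Scol α) i → SuccAbove α T i) {x y : ℕ} (hx : 1 ≤ x)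
    (hxy : x < y) (hy : y ≤ α.sum)
    (hcol : (cellOf α (Scol α) x).2 = (cellOf α (Scol α) y).2) :
    (cellOf α T x).1 < (cellOf α T y).1 := by
  refine strictMonoOn_of_lt_succ (f := fun m => (cellOf α T m).1) Set.ordConnected_Icc
    (fun z _ hz hz' => ?_) (Set.left_mem_Icc.2 hxy.le) (Set.right_mem_Icc.2 hxy.le) hxy
  rw [Order.succ_eq_add_one] at hz' ⊢
  have h1 : 1 ≤ z := hx.trans hz.1
  have h2 : z + 1 ≤ α.sum := hz'.2.trans hy
  have hmono := monotoneOn_col_scol (α := α)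
  have hxz := hmono ⟨hx, by omega⟩ ⟨h1, by omega⟩ hz.1
  have hzz := hmono ⟨h1, by omega⟩ ⟨by omega, h2⟩ (Nat.le_succ z)
  have hzy := hmono ⟨by omega, h2⟩ ⟨by omega, hy⟩ hz'.2
  simp only at hxz hzz hzy
  exact (hT.1.succAbove_iff h1 h2).1 (hasc z (succAbove_scol_of_col_eq h1 h2 (by omega)))

lemma col_le_col_scol (hT : IsSET α T)
    (hasc : ∀ i, SuccAbove α (Scol α) i → SuccAbove α T i) {m : ℕ} (h1 : 1 ≤ m)
    (h2 : m ≤ α.sum) :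
    (cellOf α T m).2 ≤ (cellOf α (Scol α) m).2 := by
  obtain ⟨hc, hv⟩ := hT.1.cellOf_spec h1 h2
  generalize cellOf α T m = c at hc hv ⊢
  obtain ⟨r, k⟩ := c
  set colS := fun m => (cellOf α (Scol α) m).2
  have hcell : ∀ a ≤ k, IsCell α (r, a) := fun a ha => ⟨hc.1, lt_of_le_of_lt ha hc.2⟩
  have hdistinct : ∀ a b, a < b → b ≤ k → colS (T (r, a)) ≠ colS (T (r, b)) := by
    intro a b hab hbk heq
    have hca := hcell a (hab.le.trans hbk)
    have hcb := hcell b hbk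
    have := row_lt_of_col_scol_eq hT hasc (hT.1.2.1 _ hca).1 (hT.2.1 r a b hca hcb hab)
      (hT.1.2.1 _ hcb).2 heq
    rw [hT.1.cellOf_apply hca, hT.1.cellOf_apply hcb] at this
    exact lt_irrefl _ this
  calc k = #(range k) := (card_range k).symm
    _ ≤ #(range (colS m)) := by
      refine card_le_card_of_injOn (fun a => colS (T (r, a))) (fun a ha => ?_)
        fun a ha b hb h => ?_
      · rw [coe_range, Set.mem_Iio] at ha
        rw [coe_range, Set.mem_Iio]
        have hca := hcell a ha.le
        refine lt_of_le_of_ne ?_ (hv ▸ hdistinct a k ha le_rfl)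
        exact monotoneOn_col_scol (hT.1.2.1 _ hca) ⟨h1, h2⟩
          (hv ▸ (hT.2.1 r a k hca hc ha).le)
      · rw [coe_range, Set.mem_Iio] at ha hb
        by_contra hne
        rcases lt_or_gt_of_ne hne with hab | hab
        · exact hdistinct a b hab hb.le h
        · exact hdistinct b a hab ha.le h.symm
    _ = colS m := card_range _

lemma eq_scol_of_forall_succAbove_scol (hT : IsSET α T)
    (hasc : ∀ i, SuccAbove α (Scol α) i → SuccAbove α T i) : T = Scol α := by
  have hle : ∀ m ∈ Icc 1 α.sum, (cellOf α T m).2 ≤ (cellOf α (Scol α) m).2 := fun m hm =>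
    col_le_col_scol hT hasc (mem_Icc.1 hm).1 (mem_Icc.1 hm).2
  have hsum : ∑ m ∈ Icc 1 α.sum, (cellOf α T m).2 =
      ∑ m ∈ Icc 1 α.sum, (cellOf α (Scol α) m).2 := by
    rw [hT.1.sum_cellOf Prod.snd, isSET_scol.1.sum_cellOf Prod.snd]
  have heq := (sum_eq_sum_iff_of_le hle).1 hsum
  exact eq_scol_of_monotoneOn_col hT
    (monotoneOn_col_scol.congr fun m hm => (heq m (by simpa using hm)).symm)

local notation "Z_[" α "]" => {T : Filling // IsSET α T} →₀ ℚ

noncomputable def scolSET (α : List ℕ) : {T : Filling // IsSET α T} := ⟨Scol α, isSET_scol⟩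

def CommutesWithPiRS (α : List ℕ) (f : Z_[α] →ₗ[ℚ] Z_[α]) : Prop :=
  ∀ i, 1 ≤ i → i + 1 ≤ α.sum → ∀ y, f (piRSLinSET α i y) = piRSLinSET α i (f y)

lemma piRSLinSET_single (s : {T : Filling // IsSET α T}) :
    piRSLinSET α i (Finsupp.single s 1) = piTargetSET α i s := by
  rw [piRSLinSET, Finsupp.lsum_single, LinearMap.toSpanSingleton_apply, one_smul]

lemma piRSLinSET_single_of_succAbove (hT : IsSET α T) (h : SuccAbove α T i) :
    piRSLinSET α i (Finsupp.single ⟨T, hT⟩ 1) = Finsupp.single ⟨T, hT⟩ 1 := by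
  rw [piRSLinSET_single, piTargetSET, piRS, if_pos h]
  exact dif_pos hT

lemma piRSLinSET_single_swapEntries (hT : IsSET α T) (h1 : 1 ≤ i) (h2 : i + 1 ≤ α.sum)
    (hrow : (cellOf α T i).1 < (cellOf α T (i + 1)).1) (hT' : IsSET α (swapEntries i T)) :
    piRSLinSET α i (Finsupp.single ⟨swapEntries i T, hT'⟩ 1) =
      Finsupp.single ⟨T, hT⟩ 1 := by
  have hrows : (cellOf α (swapEntries i T) (i + 1)).1 < (cellOf α (swapEntries i T) i).1 := by
    rwa [hT.1.cellOf_swapEntries_left h1 h2, hT.1.cellOf_swapEntries_right h1 h2]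
  have hA : ¬ SuccAbove α (swapEntries i T) i := by
    rw [hT'.1.succAbove_iff h1 h2]
    exact not_lt.2 hrows.le
  have hS : ¬ SuccSameRow α (swapEntries i T) i := by
    rw [hT'.1.succSameRow_iff h1 h2]
    exact hrows.ne'
  rw [piRSLinSET_single, piTargetSET, piRS, if_neg hA, if_neg hS]
  simp only [swapEntries_swapEntries, dif_pos hT]

lemma piTargetSET_eq_zero_or_single_succAbove (s : {T : Filling // IsSET α T}) (h1 : 1 ≤ i)
    (h2 : i + 1 ≤ α.sum) :
    piTargetSET α i s = 0 ∨
      ∃ t : {T : Filling // IsSET α T}, SuccAbove α t.1 i ∧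
        piTargetSET α i s = Finsupp.single t 1 := by
  obtain ⟨T, hT⟩ := s
  unfold piTargetSET piRS
  by_cases hA : SuccAbove α T i
  · exact Or.inr ⟨⟨T, hT⟩, hA, by simp only [if_pos hA, dif_pos hT]⟩
  by_cases hS : SuccSameRow α T i
  · exact Or.inl (by simp only [if_neg hA, if_pos hS])
  by_cases hT' : IsSET α (swapEntries i T)
  · refine Or.inr ⟨⟨_, hT'⟩, ?_, by simp only [if_neg hA, if_neg hS, dif_pos hT']⟩
    rw [hT.1.succAbove_iff h1 h2] at hA
    rw [hT.1.succSameRow_iff h1 h2] at hS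
    rw [hT'.1.succAbove_iff h1 h2, hT.1.cellOf_swapEntries_left h1 h2,
      hT.1.cellOf_swapEntries_right h1 h2]
    omega
  · exact Or.inl (by simp only [if_neg hA, if_neg hS, dif_neg hT'])

lemma piRSLinSET_apply_eq_zero (y : Z_[α]) (hT : IsSET α T) (h1 : 1 ≤ i) (h2 : i + 1 ≤ α.sum)
    (hA : ¬ SuccAbove α T i) : piRSLinSET α i y ⟨T, hT⟩ = 0 := by
  induction y using Finsupp.induction_linear with
  | zero => simp
  | add y z hy hz => rw [map_add, Finsupp.add_apply, hy, hz, add_zero]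
  | single s b =>
    rw [← Finsupp.smul_single_one, map_smul, Finsupp.smul_apply, piRSLinSET_single]
    rcases piTargetSET_eq_zero_or_single_succAbove s h1 h2 with h | ⟨t, ht, h⟩
    · rw [h, Finsupp.zero_apply, smul_zero]
    · rw [h, Finsupp.single_eq_of_ne, smul_zero]
      rintro rfl
      exact hA ht

variable {f : Z_[α] →ₗ[ℚ] Z_[α]}

lemma CommutesWithPiRS.apply_single_scolSET (hf : CommutesWithPiRS α f) :
    f (Finsupp.single (scolSET α) 1) =
      f (Finsupp.single (scolSET α) 1) (scolSET α) • Finsupp.single (scolSET α) 1 := by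
  ext ⟨T, hT⟩
  by_cases hTS : T = Scol α
  · subst hTS
    rw [Finsupp.smul_apply, scolSET, Finsupp.single_eq_same, smul_eq_mul, mul_one]
  obtain ⟨i, hSA, hA⟩ : ∃ i, SuccAbove α (Scol α) i ∧ ¬ SuccAbove α T i := by
    by_contra! h
    exact hTS (eq_scol_of_forall_succAbove_scol hT h)
  obtain ⟨h1, h2⟩ := isSET_scol.1.bounds_of_succAbove hSA
  have hfix := congrArg f (piRSLinSET_single_of_succAbove isSET_scol hSA)
  rw [hf i h1 h2] at hfix
  rw [Finsupp.smul_apply, Finsupp.single_eq_of_ne (fun h => hTS (congrArg Subtype.val h)),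
    smul_zero, scolSET, ← hfix, piRSLinSET_apply_eq_zero _ hT h1 h2 hA]

lemma CommutesWithPiRS.apply_single (hf : CommutesWithPiRS α f) {a : ℚ}
    (hS : f (Finsupp.single (scolSET α) 1) = a • Finsupp.single (scolSET α) 1)
    (hT : IsSET α T) : f (Finsupp.single ⟨T, hT⟩ 1) = a • Finsupp.single ⟨T, hT⟩ 1 := by
  induction hw : rowWeight α T using Nat.strong_induction_on generalizing T with
  | _ w ih =>
  by_cases hTS : T = Scol α
  · subst hTS
    exact hS
  obtain ⟨i, h1, h2, hrow, hcol⟩ := exists_succAbove_col_ne_of_ne_scol hT hTS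
  have hT' := isSET_swapEntries hT h1 h2 hrow.ne hcol
  have hpi := piRSLinSET_single_swapEntries hT h1 h2 hrow hT'
  rw [← hpi, hf i h1 h2, ih _ (hw ▸ rowWeight_swapEntries_lt hT.1 h1 h2 hrow) hT' rfl,
    map_smul, hpi]

lemma CommutesWithPiRS.exists_eq_smul_id (hf : CommutesWithPiRS α f) :
    ∃ a : ℚ, f = a • LinearMap.id :=
  ⟨_, Finsupp.basisSingleOne.ext fun s => by
    rw [Finsupp.coe_basisSingleOne, LinearMap.smul_apply, LinearMap.id_apply]
    exact hf.apply_single hf.apply_single_scolSET s.2⟩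

theorem Z_indecomposable (n : ℕ) (α : List ℕ) (hα : IsComposition α n)
    (f : ({T : Filling // IsSET α T} →₀ ℚ) →ₗ[ℚ] ({T : Filling // IsSET α T} →₀ ℚ))
    (hidem : f ∘ₗ f = f)
    (hcomm : ∀ i, 1 ≤ i → i ≤ n - 1 → f ∘ₗ piRSLinSET α i = piRSLinSET α i ∘ₗ f) :
    f = 0 ∨ f = LinearMap.id := by
  obtain ⟨-, rfl⟩ := hα
  have hf : CommutesWithPiRS α f := fun i h1 h2 =>
    LinearMap.congr_fun (hcomm i h1 (Nat.le_sub_one_of_lt h2))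
  obtain ⟨a, rfl⟩ := hf.exists_eq_smul_id
  set e : {T : Filling // IsSET α T} →₀ ℚ := Finsupp.single (scolSET α) 1
  have he : (a * a) • e = a • e := by
    simpa [smul_smul] using LinearMap.congr_fun hidem e
  rcases IsIdempotentElem.iff_eq_zero_or_one.1
    (smul_left_injective ℚ (Finsupp.single_ne_zero.2 one_ne_zero) he) with rfl | rfl
  · exact Or.inl (zero_smul ℚ _)
  · exact Or.inr (one_smul ℚ _)

end ImmHecke
end

section
/- Let α be a composition of n. If T ∈ SIT(α) \ SET(α) (i.e. T ∈ SIT(α) has at least one column that does not strictly increase from bottom to top), then for every 1 ≤ i ≤ n−1, π_i^{S*}(T) ∈ (SIT(α) \ SET(α)) ∪ {0}; that is, SIT(α) \ SET(α) is closed under the dual immaculate 0-Hecke operators. -/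
open Classical

namespace ImmHecke

theorem NSET_closed_under_piS (n : ℕ) (α : List ℕ) (hα : IsComposition α n)
    (T : Filling) (hT : IsSIT α T) (hTnot : ¬ IsSET α T)
    (i : ℕ) (hi1 : 1 ≤ i) (hi2 : i ≤ n - 1) :
    piS α i (some T) = none ∨
      ∃ T', piS α i (some T) = some T' ∧ IsSIT α T' ∧ ¬ IsSET α T' := by
  by_cases hsb : SuccSameRow α T i ∨ SuccBelow α T i
  · exact Or.inr ⟨T, by simp [piS, hsb], hT, hTnot⟩
  by_cases hbf : BothFirstColumn α T i
  · exact Or.inl (by simp [piS, hsb, hbf])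
  right
  obtain ⟨hstd, hcol1, hrow⟩ := hT
  obtain ⟨hoff, hrange, hinj, hsurj⟩ := hstd
  have hn : α.sum = n := hα.2
  have hin : i + 1 ≤ α.sum := by omega
  obtain ⟨c, hc, hTc⟩ := hsurj i hi1 (by omega)
  obtain ⟨c', hc', hTc'⟩ := hsurj (i + 1) (by omega) (by omega)
  have hcc' : c.1 < c'.1 := by
    rcases lt_trichotomy c.1 c'.1 with h | h | h
    · exact h
    · exact absurd (Or.inl ⟨c, c', hc, hc', hTc, hTc', h⟩) hsb
    · exact absurd (Or.inr ⟨c, c', hc, hc', hTc, hTc', h⟩) hsb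
  have hSc : swapEntries i T c = i + 1 := by simp [swapEntries, hTc]
  have hSc' : swapEntries i T c' = i := by simp [swapEntries, hTc']
  have hSother : ∀ d, T d ≠ i → T d ≠ i + 1 → swapEntries i T d = T d := by
    intro d h1 h2; simp [swapEntries, h1, h2]
  have hvali : ∀ d, IsCell α d → T d = i → d = c := fun d hd h =>
    hinj d c hd hc (h.trans hTc.symm)
  have hvali1 : ∀ d, IsCell α d → T d = i + 1 → d = c' := fun d hd h =>
    hinj d c' hd hc' (h.trans hTc'.symm)
  have key : ∀ d e, IsCell α d → IsCell α e → T d < T e → ¬(d = c ∧ e = c') →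
      swapEntries i T d < swapEntries i T e := by
    intro d e hd he hlt hne
    by_cases h1 : T d = i
    · have hdc : d = c := hvali d hd h1
      have he1 : T e ≠ i + 1 := fun h => hne ⟨hdc, hvali1 e he h⟩
      have he2 : T e ≠ i := by omega
      rw [hSother e he2 he1, hdc, hSc]; omega
    by_cases h2 : T d = i + 1
    · have : swapEntries i T d = i := by simp [swapEntries, h1, h2]
      rw [this, hSother e (by omega) (by omega)]; omega
    rw [hSother d h1 h2]
    by_cases h3 : T e = i
    · have : swapEntries i T e = i + 1 := by simp [swapEntries, h3]
      omega
    by_cases h4 : T e = i + 1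
    · have : swapEntries i T e = i := by simp [swapEntries, h3, h4]
      omega
    rw [hSother e h3 h4]; exact hlt
  have hSIT : IsSIT α (swapEntries i T) := by
    refine ⟨⟨?_, ?_, ?_, ?_⟩, ?_, ?_⟩
    · intro d hd
      have h0 := hoff d hd
      rw [hSother d (by omega) (by omega)]; exact h0
    · intro d hd
      have h0 := hrange d hd
      simp only [swapEntries]; split_ifs <;> omega
    · intro d e hd he h
      apply hinj d e hd he
      simp only [swapEntries] at h
      split_ifs at h <;> omega
    · intro m h1 h2
      by_cases hm : m = i
      · exact ⟨c', hc', by rw [hSc', hm]⟩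
      by_cases hm' : m = i + 1
      · exact ⟨c, hc, by rw [hSc, hm']⟩
      obtain ⟨d, hd, hTd⟩ := hsurj m h1 h2
      exact ⟨d, hd, by rw [hSother d (by omega) (by omega)]; exact hTd⟩
    · intro r r' hr hr' hlt
      refine key (r, 0) (r', 0) hr hr' (hcol1 r r' hr hr' hlt) ?_
      rintro ⟨h1, h2⟩
      exact hbf ⟨c, c', hc, hc', hTc, hTc', by rw [← h1], by rw [← h2]⟩
    · intro r j j' hcell hcell' hlt
      refine key (r, j) (r, j') hcell hcell' (hrow r j j' hcell hcell' hlt) ?_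
      rintro ⟨h1, h2⟩
      rw [← h1, ← h2] at hcc'
      simp at hcc'
  refine ⟨swapEntries i T, by simp [piS, hsb, hbf], hSIT, ?_⟩
  have hcolfail : ¬ ∀ r r' j, IsCell α (r, j) → IsCell α (r', j) → r < r' →
      T (r, j) < T (r', j) :=
    fun h => hTnot ⟨⟨hoff, hrange, hinj, hsurj⟩, hrow, h⟩
  push_neg at hcolfail
  obtain ⟨r, r', j, h1, h2, h3, h4⟩ := hcolfail
  have h5 : T (r', j) < T (r, j) := by
    rcases lt_or_eq_of_le h4 with h | h
    · exact h
    · have := hinj _ _ h2 h1 h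
      simp at this; omega
  intro hS
  have h6 := hS.2.2 r r' j h1 h2 h3
  have h7 : swapEntries i T (r', j) < swapEntries i T (r, j) := by
    refine key (r', j) (r, j) h2 h1 h5 ?_
    rintro ⟨e1, e2⟩
    rw [← e1, ← e2] at hcc'
    simp at hcc'; omega
  omega

end ImmHecke
end
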